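/- Let S be a vertex subset of a graph G constructed by the stack-based procedure of Algorithm 1: initialize S = {v}; whenever a vertex u popped from the stack has no neighbor in S other than its recorded parent (which is in S), add u to S. Then at every point of the execution, the subgraph induced by S is a tree; in particular the final S induces a tree. -/

import Mathlib

/-- A vertex set built by the stack-based procedure of Algorithm 1: starting from `{v}`,
a vertex `u` is added when its recorded parent `p` is in `S`, is adjacent to `u`, and no
other neighbor of `u` lies in `S`. -/
inductive StackSet {V : Type*} (G : SimpleGraph V) : Set V → Prop
  | base (v : V) : StackSet G {v}
  | step (S : Set V) (u p : V) (hp : p ∈ S) (hadj : G.Adj u p) (hu : u ∉ S)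
      (honly : ∀ q ∈ S, G.Adj u q → q = p) :
      StackSet G S → StackSet G (insert u S)

namespace SimpleGraph

variable {V : Type*} {G : SimpleGraph V} {s : Set V} {u p : V}

lemma isAcyclic_induce_iff :
    (G.induce s).IsAcyclic ↔ ∀ ⦃v⦄ (c : G.Walk v v), c.IsCycle → ¬ ∀ x ∈ c.support, x ∈ s := by
  have hmap {a} (c : (G.induce s).Walk a a) :
      (c.map (Embedding.induce s).toHom).IsCycle ↔ c.IsCycle :=
    Walk.isCycle_map_iff_of_injective (Embedding.induce (G := G) s).injective
  refine ⟨fun hs v c hc hcs => hs (c.induce s hcs) ?_, fun h v c hc => ?_⟩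
  · rwa [← hmap, Walk.map_induce]
  · refine h _ ((hmap c).2 hc) ?_
    simp only [Walk.support_map, List.mem_map]
    rintro _ ⟨x, -, rfl⟩
    exact x.2

/-- Every vertex of a cycle has two neighbours on it, so a vertex with at most one neighbour in
`s` lies on no cycle inside `insert u s`. -/
lemma isAcyclic_induce_insert (hs : (G.induce s).IsAcyclic)
    (hu : (G.neighborSet u ∩ s).Subsingleton) : (G.induce (insert u s)).IsAcyclic := by
  rw [isAcyclic_induce_iff] at hs ⊢
  intro v c hc hcs
  by_cases huc : u ∈ c.support
  · have hnbr : c.toSubgraph.neighborSet u ⊆ G.neighborSet u ∩ s := by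
      intro q hq
      have hadj : G.Adj u q := c.toSubgraph.adj_sub hq
      have hqs : q ∈ insert u s := hcs q (c.mem_support_of_adj_toSubgraph hq.symm)
      exact ⟨hadj, hqs.resolve_left hadj.ne'⟩
    have htwo := (Set.one_lt_ncard_iff_nontrivial_and_finite.1
      (by rw [hc.ncard_neighborSet_toSubgraph_eq_two huc]; norm_num)).1
    exact Set.not_nontrivial_iff.2 (hu.anti hnbr) htwo
  · exact hs c hc fun x hx => (hcs x hx).resolve_left fun hxu => huc (hxu ▸ hx)

lemma connected_induce_insert (hs : (G.induce s).Preconnected) (hp : p ∈ s)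
    (hadj : G.Adj u p) : (G.induce (insert u s)).Connected := by
  have hu : (G.induce {u}).Preconnected := IsTree.of_subsingleton.connected.preconnected
  rw [← Set.union_singleton]
  exact connected_induce_union hs hu hp rfl hadj.symm

lemma isTree_induce_insert (hs : (G.induce s).IsTree) (hp : p ∈ s) (hadj : G.Adj u p)
    (honly : ∀ q ∈ s, G.Adj u q → q = p) : (G.induce (insert u s)).IsTree :=
  ⟨connected_induce_insert hs.connected.preconnected hp hadj,
    isAcyclic_induce_insert hs.isAcyclic
      (Set.subsingleton_of_forall_eq p fun q hq => honly q hq.2 hq.1)⟩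

end SimpleGraph

/-- At every point of the execution of the stack-based procedure, the subgraph induced by the
current set is a tree; in particular the final set induces a tree. -/
theorem stackSet_induce_isTree {V : Type*} (G : SimpleGraph V) (S : Set V)
    (hS : StackSet G S) : (G.induce S).IsTree := by
  induction hS with
  | base v => exact .of_subsingleton
  | step S u p hp hadj _ honly _ ih => exact G.isTree_induce_insert ih hp hadj honly
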